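/- arXiv:1104.4267 — 2 statements merged into one kernel-verified Lean document; each statement's English description precedes it below -/
import Mathlib

section
/- Improved energy estimate, ρ₋ case (Proposition 5.6, second inequality, transcribed to ℂⁿ): Let H⁽⁰⁾, H⁽¹⁾ : [0,1] × ℂⁿ → ℝ be smooth compactly supported Hamiltonians; set θ_t := φ_{H⁽¹⁾}^{1−t} ∘ (φ_{H⁽¹⁾}^1)⁻¹ and Ĥ(t,x) := −H⁽¹⁾(1−t, x) + H⁽⁰⁾(t, θ_t⁻¹(x)). Let ρ₊ be an elongation function of type ρ₊, ρ₋ = 1 − ρ₊, and let u : ℝ × [0,1] → ℂⁿ be a smooth map solving ∂u/∂τ + i(∂u/∂t − ρ₋(τ)X_{Ĥ_t}(u(τ,t))) = 0 with finite energy E_{(Ĥ,ρ₋)}(u) < ∞. Assume u(τ,·) converges uniformly on [0,1] as τ → −∞ to a continuous path ℓ₋ : [0,1] → ℂⁿ, the improper integral ∫u*ω converges, and ∫_{ℝ×[0,1]} |dĤ_t(u(τ,t))[∂u/∂τ(τ,t)]| dτ dt < ∞. Then ∫u*ω − ∫₀¹ Ĥ(t, ℓ₋(t)) dt ≥ −(E⁺(H⁽⁰⁾)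 + E⁻(H⁽¹⁾)). -/
open MeasureTheory Set Filter

noncomputable section

abbrev CE (n : ℕ) : Type := EuclideanSpace ℂ (Fin n)

/-- The standard symplectic form `ω(v, w) = ⟨i • v, w⟩_ℝ` on `ℂⁿ ≅ ℝ²ⁿ`. -/
def symp {n : ℕ} (v w : CE n) : ℝ := inner (𝕜 := ℝ) ((Complex.I : ℂ) • v) w

/-- The Hamiltonian vector field `X_{H_t}(x) = -i ∇H_t(x)`. -/
def hamVF {n : ℕ} (H : ℝ → CE n → ℝ) (t : ℝ) (x : CE n) : CE n :=
  (-Complex.I : ℂ) • gradient (H t) x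

/-- ∂u/∂τ. -/
def d1 {n : ℕ} (u : ℝ × ℝ → CE n) (p : ℝ × ℝ) : CE n := deriv (fun s => u (s, p.2)) p.1

/-- ∂u/∂t. -/
def d2 {n : ℕ} (u : ℝ × ℝ → CE n) (p : ℝ × ℝ) : CE n := deriv (fun s => u (p.1, s)) p.2

/-- The strip `ℝ × [0,1]`. -/
def strip : Set (ℝ × ℝ) := Set.univ ×ˢ Set.Icc (0 : ℝ) 1

/-- The energy density `|∂u/∂τ|² + |∂u/∂t − ρ(τ) X_{H_t}(u)|²`. -/
def enDensity {n : ℕ} (H : ℝ → CE n → ℝ) (ρ : ℝ → ℝ) (u : ℝ × ℝ → CE n) (p : ℝ × ℝ) : ℝ :=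
  ‖d1 u p‖ ^ 2 + ‖d2 u p - ρ p.1 • hamVF H p.2 (u p)‖ ^ 2

/-- The energy `E_{(H,ρ)}(u)`. -/
def energy {n : ℕ} (H : ℝ → CE n → ℝ) (ρ : ℝ → ℝ) (u : ℝ × ℝ → CE n) : ℝ :=
  (1 / 2) * ∫ p in strip, enDensity H ρ u p

/-- The symplectic area `∫ u*ω`. -/
def area {n : ℕ} (u : ℝ × ℝ → CE n) : ℝ := ∫ p in strip, symp (d1 u p) (d2 u p)

def Eplus {n : ℕ} (H : ℝ → CE n → ℝ) : ℝ := ∫ t in (0:ℝ)..1, ⨆ x : CE n, H t x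
def Eminus {n : ℕ} (H : ℝ → CE n → ℝ) : ℝ := -∫ t in (0:ℝ)..1, ⨅ x : CE n, H t x
def hoferNorm {n : ℕ} (H : ℝ → CE n → ℝ) : ℝ := Eplus H + Eminus H

/-- An elongation function of type `ρ₊`. -/
structure IsElongationPlus (ρ : ℝ → ℝ) : Prop where
  smooth : ContDiff ℝ (⊤ : ℕ∞) ρ
  mono : Monotone ρ
  mem : ∀ τ : ℝ, ρ τ ∈ Set.Icc (0:ℝ) 1
  zero : ∀ τ : ℝ, τ ≤ 0 → ρ τ = 0
  one : ∀ τ : ℝ, 1 ≤ τ → ρ τ = 1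

/-- An elongation function of type `ρ_K`. -/
structure IsElongationK (K : ℝ) (ρ : ℝ → ℝ) : Prop where
  smooth : ContDiff ℝ (⊤ : ℕ∞) ρ
  mem : ∀ τ : ℝ, ρ τ ∈ Set.Icc (0:ℝ) 1
  zero : ∀ τ : ℝ, K ≤ |τ| → ρ τ = 0
  one : ∀ τ : ℝ, |τ| ≤ K - 1 → ρ τ = 1
  incr : ∀ τ ∈ Set.Icc (-K) (-K + 1), 0 ≤ deriv ρ τ
  decr : ∀ τ ∈ Set.Icc (K - 1) K, deriv ρ τ ≤ 0

/-- `u` solves the `ρ`-perturbed Cauchy–Riemann equation on `ℝ × [0,1]`. -/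
def SolvesCR {n : ℕ} (H : ℝ → CE n → ℝ) (ρ : ℝ → ℝ) (u : ℝ × ℝ → CE n) : Prop :=
  ∀ p : ℝ × ℝ, p.2 ∈ Set.Icc (0:ℝ) 1 →
    d1 u p + (Complex.I : ℂ) • (d2 u p - ρ p.1 • hamVF H p.2 (u p)) = 0

/-- `φ` is the Hamiltonian flow of `H`. -/
structure IsHamFlow {n : ℕ} (H : ℝ → CE n → ℝ) (φ : ℝ → CE n ≃ CE n) : Prop where
  init : ∀ x, φ 0 x = x
  isFlow : ∀ t x, HasDerivAt (fun s => φ s x) (hamVF H t (φ t x)) t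
  smooth : ContDiff ℝ (⊤ : ℕ∞) fun p : ℝ × CE n => φ p.1 p.2
  smooth_symm : ContDiff ℝ (⊤ : ℕ∞) fun p : ℝ × CE n => (φ p.1).symm p.2

namespace ImpAux

open Complex

variable {n : ℕ}

lemma rinner_I_I (a b : CE n) :
    (inner (𝕜 := ℝ) ((I : ℂ) • a) ((I : ℂ) • b) : ℝ) = inner (𝕜 := ℝ) a b := by
  simp only [PiLp.inner_apply, PiLp.smul_apply, smul_eq_mul, Complex.inner, map_mul, conj_I]
  refine Finset.sum_congr rfl fun i _ => ?_
  congr 1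
  ring_nf
  simp [Complex.I_sq]

lemma inner_gradient (f : CE n → ℝ) (x v : CE n) :
    (inner (𝕜 := ℝ) (gradient f x) v : ℝ) = fderiv ℝ f x v := by
  simp only [gradient, InnerProductSpace.toDual_symm_apply]

lemma symp_formula (v g : CE n) (c : ℝ) :
    symp v ((I : ℂ) • v + c • ((-I : ℂ) • g)) = ‖v‖ ^ 2 - c * inner (𝕜 := ℝ) g v := by
  rw [symp, inner_add_right, real_inner_smul_right]
  have h1 : (inner (𝕜 := ℝ) ((I:ℂ) • v) ((I:ℂ) • v) : ℝ) = ‖v‖ ^ 2 := by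
    rw [rinner_I_I, real_inner_self_eq_norm_sq]
  have h2 : (inner (𝕜 := ℝ) ((I:ℂ) • v) ((-I:ℂ) • g) : ℝ) = -inner (𝕜 := ℝ) v g := by
    rw [show ((-I : ℂ)) • g = -((I:ℂ) • g) by rw [neg_smul], inner_neg_right, rinner_I_I]
  rw [h1, h2, real_inner_comm v g]
  ring

variable {E : Type*} [NormedAddCommGroup E] [Nonempty E]

lemma continuous_iSup {f : ℝ → E → ℝ} (hc : Continuous (Function.uncurry f))
    (hs : HasCompactSupport (Function.uncurry f)) : Continuous fun t => ⨆ x, f t x := by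
  obtain ⟨C, hC⟩ := hs.exists_bound_of_continuous hc
  have hbdd : ∀ t : ℝ, BddAbove (Set.range (f t)) := by
    intro t
    refine ⟨C, ?_⟩
    rintro y ⟨x, rfl⟩
    exact (le_abs_self _).trans (by simpa [Real.norm_eq_abs] using hC (t, x))
  have huc := hs.uniformContinuous_of_continuous hc
  rw [Metric.continuous_iff]
  intro t ε hε
  obtain ⟨δ, hδpos, hδ⟩ := Metric.uniformContinuous_iff.mp huc (ε / 2) (by positivity)
  refine ⟨δ, hδpos, fun t' ht' => ?_⟩
  have key : ∀ a b : ℝ, dist a b < δ → (⨆ x, f a x) ≤ (⨆ x, f b x) + ε / 2 := by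
    intro a b hab
    refine ciSup_le fun x => ?_
    have : dist ((a, x) : ℝ × E) (b, x) < δ := by
      rw [Prod.dist_eq]
      simpa using hab
    have h2 := hδ this
    rw [Real.dist_eq, abs_sub_lt_iff] at h2
    have : f a x ≤ f b x + ε / 2 := by
      have := h2.1
      simp only [Function.uncurry_apply_pair] at this ⊢
      linarith
    exact this.trans (add_le_add_left (le_ciSup (hbdd b) x) _)
  rw [Real.dist_eq, abs_sub_lt_iff]
  have k1 := key t' t ht'
  have k2 := key t t' (by rwa [dist_comm])
  constructor <;> linarith

lemma continuous_iInf {f : ℝ → E → ℝ} (hc : Continuous (Function.uncurry f))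
    (hs : HasCompactSupport (Function.uncurry f)) : Continuous fun t => ⨅ x, f t x := by
  obtain ⟨C, hC⟩ := hs.exists_bound_of_continuous hc
  have hbdd : ∀ t : ℝ, BddBelow (Set.range (f t)) := by
    intro t
    refine ⟨-C, ?_⟩
    rintro y ⟨x, rfl⟩
    exact neg_le_of_abs_le (by simpa [Real.norm_eq_abs] using hC (t, x))
  have huc := hs.uniformContinuous_of_continuous hc
  rw [Metric.continuous_iff]
  intro t ε hε
  obtain ⟨δ, hδpos, hδ⟩ := Metric.uniformContinuous_iff.mp huc (ε / 2) (by positivity)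
  refine ⟨δ, hδpos, fun t' ht' => ?_⟩
  have key : ∀ a b : ℝ, dist a b < δ → (⨅ x, f b x) - ε / 2 ≤ ⨅ x, f a x := by
    intro a b hab
    refine le_ciInf fun x => ?_
    have : dist ((a, x) : ℝ × E) (b, x) < δ := by
      rw [Prod.dist_eq]
      simpa using hab
    have h2 := hδ this
    rw [Real.dist_eq, abs_sub_lt_iff] at h2
    have hfx : f b x - ε / 2 ≤ f a x := by
      have := h2.2
      simp only [Function.uncurry_apply_pair] at this ⊢
      linarith
    have : (⨅ x, f b x) ≤ f b x := ciInf_le (hbdd b) x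
    linarith
  rw [Real.dist_eq, abs_sub_lt_iff]
  have k1 := key t' t ht'
  have k2 := key t t' (by rwa [dist_comm])
  constructor <;> linarith

lemma deriv_elong_zero {ρ : ℝ → ℝ} (hsm : ContDiff ℝ (⊤ : ℕ∞) ρ)
    (h0 : ∀ τ : ℝ, τ ≤ 0 → ρ τ = 0) (h1 : ∀ τ : ℝ, 1 ≤ τ → ρ τ = 1) :
    ∀ τ : ℝ, τ ∉ Set.Ioo (0:ℝ) 1 → deriv ρ τ = 0 := by
  have hc : Continuous (deriv ρ) := hsm.continuous_deriv (by simp)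
  have hcl : IsClosed {x : ℝ | deriv ρ x = 0} := isClosed_eq hc continuous_const
  have hIio : Set.Iio (0:ℝ) ⊆ {x | deriv ρ x = 0} := by
    intro τ hτ
    have heq : ρ =ᶠ[nhds τ] fun _ => (0:ℝ) := by
      filter_upwards [Iio_mem_nhds hτ] with x hx using h0 x (le_of_lt hx)
    simp only [Set.mem_setOf_eq, heq.deriv_eq, deriv_const]
  have hIoi : Set.Ioi (1:ℝ) ⊆ {x | deriv ρ x = 0} := by
    intro τ hτ
    have heq : ρ =ᶠ[nhds τ] fun _ => (1:ℝ) := by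
      filter_upwards [Ioi_mem_nhds hτ] with x hx using h1 x (le_of_lt hx)
    simp only [Set.mem_setOf_eq, heq.deriv_eq, deriv_const]
  intro τ hτ
  rw [Set.mem_Ioo, not_and_or, not_lt, not_lt] at hτ
  rcases hτ with hτ | hτ
  · have : τ ∈ closure (Set.Iio (0:ℝ)) := by rwa [closure_Iio, Set.mem_Iic]
    exact (hcl.closure_eq ▸ closure_mono hIio) this
  · have : τ ∈ closure (Set.Ioi (1:ℝ)) := by rwa [closure_Ioi, Set.mem_Ici]
    exact (hcl.closure_eq ▸ closure_mono hIoi) this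

lemma deriv_elong_nonneg {ρ : ℝ → ℝ} (hsm : ContDiff ℝ (⊤ : ℕ∞) ρ) (hmono : Monotone ρ) (τ : ℝ) :
    0 ≤ deriv ρ τ := by
  have hd : HasDerivAt ρ (deriv ρ τ) τ :=
    ((hsm.differentiable (by simp)) τ).hasDerivAt
  have hs := hasDerivAt_iff_tendsto_slope.mp hd
  have hs' : Filter.Tendsto (slope ρ τ) (nhdsWithin τ (Set.Ioi τ)) (nhds (deriv ρ τ)) :=
    hs.mono_left (nhdsWithin_mono τ fun x hx => ne_of_gt hx)
  refine ge_of_tendsto hs' ?_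
  filter_upwards [self_mem_nhdsWithin] with y hy
  rw [slope_def_field]
  exact div_nonneg (sub_nonneg.mpr (hmono (le_of_lt hy))) (sub_nonneg.mpr (le_of_lt hy))

lemma integral_deriv_elong {ρ : ℝ → ℝ} (hsm : ContDiff ℝ (⊤ : ℕ∞) ρ)
    (h0 : ∀ τ : ℝ, τ ≤ 0 → ρ τ = 0) (h1 : ∀ τ : ℝ, 1 ≤ τ → ρ τ = 1) :
    ∫ τ : ℝ, deriv ρ τ = 1 := by
  have hz := deriv_elong_zero hsm h0 h1
  rw [← MeasureTheory.setIntegral_eq_integral_of_forall_compl_eq_zero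
      (s := Set.Ioo (0:ℝ) 1) (fun τ hτ => hz τ hτ)]
  rw [← integral_Ioc_eq_integral_Ioo, ← intervalIntegral.integral_of_le zero_le_one]
  rw [intervalIntegral.integral_deriv_eq_sub
      (fun x _ => (hsm.differentiable (by simp)).differentiableAt)
      ((hsm.continuous_deriv (by simp)).intervalIntegrable 0 1)]
  rw [h1 1 le_rfl, h0 0 le_rfl]
  norm_num

end ImpAux

/-- Proposition 5.6, second inequality: improved energy estimate, `ρ₋` case.
For finite-energy solutions of the `ρ₋ = 1 − ρ₊`-perturbed Cauchy–Riemann equation for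
`Ĥ(t,x) = −H⁽¹⁾(1−t,x) + H⁽⁰⁾(t, θ_t⁻¹(x))`,
`∫u*ω − ∫₀¹ Ĥ(t, ℓ₋(t)) dt ≥ −(E⁺(H⁽⁰⁾) + E⁻(H⁽¹⁾))`. -/
theorem improved_estimate_rho_minus {n : ℕ} (H0 H1 : ℝ → CE n → ℝ) (φ1 : ℝ → CE n ≃ CE n)
    (hH0smooth : ContDiff ℝ (⊤ : ℕ∞) (Function.uncurry H0))
    (hH0supp : HasCompactSupport (Function.uncurry H0))
    (hH1smooth : ContDiff ℝ (⊤ : ℕ∞) (Function.uncurry H1))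
    (hH1supp : HasCompactSupport (Function.uncurry H1))
    (hφ1 : IsHamFlow H1 φ1)
    (θinv : ℝ → CE n → CE n)
    (hθinv : θinv = fun t x => φ1 1 ((φ1 (1 - t)).symm x))
    (Hhat : ℝ → CE n → ℝ)
    (hHhat : Hhat = fun t x => -H1 (1 - t) x + H0 t (θinv t x))
    (ρ : ℝ → ℝ) (hρ : IsElongationPlus ρ)
    (u : ℝ × ℝ → CE n) (ℓ : ℝ → CE n)
    (hu : ContDiff ℝ (⊤ : ℕ∞) u)
    (hpde : SolvesCR Hhat (fun τ => 1 - ρ τ) u)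
    (hfin : IntegrableOn (enDensity Hhat (fun τ => 1 - ρ τ) u) strip)
    (harea : IntegrableOn (fun p => symp (d1 u p) (d2 u p)) strip)
    (hdH : IntegrableOn (fun p => fderiv ℝ (Hhat p.2) (u p) (d1 u p)) strip)
    (hℓ : Continuous ℓ)
    (hconv : TendstoUniformlyOn (fun τ t => u (τ, t)) ℓ Filter.atBot (Set.Icc 0 1)) :
    area u - (∫ t in (0:ℝ)..1, Hhat t (ℓ t)) ≥ -(Eplus H0 + Eminus H1) := by
  classical
  have hstripm : MeasurableSet strip := MeasurableSet.univ.prod measurableSet_Icc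
  -- smoothness of the uncurried Hhat
  have hUHeq : Function.uncurry Hhat
      = fun p : ℝ × CE n => -H1 (1 - p.1) p.2 + H0 p.1 (θinv p.1 p.2) := by
    rw [hHhat]; rfl
  have hθsm : ContDiff ℝ (⊤ : ℕ∞) (fun p : ℝ × CE n => θinv p.1 p.2) := by
    rw [hθinv]
    exact hφ1.smooth.comp (contDiff_const.prodMk
      (hφ1.smooth_symm.comp ((contDiff_const.sub contDiff_fst).prodMk contDiff_snd)))
  have hUH : ContDiff ℝ (⊤ : ℕ∞) (Function.uncurry Hhat) := by
    rw [hUHeq]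
    exact ((hH1smooth.comp ((contDiff_const.sub contDiff_fst).prodMk contDiff_snd)).neg).add
      (hH0smooth.comp (contDiff_fst.prodMk hθsm))
  have hUHc : Continuous (Function.uncurry Hhat) := hUH.continuous
  have hHt_c : ∀ t : ℝ, Continuous (Hhat t) := fun t => hUHc.comp (Continuous.prodMk_right t)
  have hHt_d : ∀ t : ℝ, Differentiable ℝ (Hhat t) := fun t =>
    (hUH.differentiable (by simp)).comp ((differentiable_const t).prodMk differentiable_id)
  -- global bounds
  obtain ⟨C0, hC0⟩ := hH0supp.exists_bound_of_continuous hH0smooth.continuous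
  obtain ⟨C1, hC1⟩ := hH1supp.exists_bound_of_continuous hH1smooth.continuous
  have hHbound : ∀ (t : ℝ) (x : CE n), |Hhat t x| ≤ C1 + C0 := by
    intro t x
    rw [hHhat]
    refine (abs_add_le _ _).trans (add_le_add ?_ ?_)
    · rw [abs_neg]; simpa [Real.norm_eq_abs] using hC1 (1 - t, x)
    · simpa [Real.norm_eq_abs] using hC0 (t, θinv t x)
  -- derivative infrastructure for u
  have hud : Differentiable ℝ u := hu.differentiable (by simp)
  have hd1h : ∀ p : ℝ × ℝ, HasDerivAt (fun s => u (s, p.2)) (fderiv ℝ u p ((1:ℝ), (0:ℝ))) p.1 := by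
    intro p
    have hg : HasDerivAt (fun s : ℝ => ((s, p.2) : ℝ × ℝ)) ((1:ℝ), (0:ℝ)) p.1 :=
      (hasDerivAt_id p.1).prodMk (hasDerivAt_const p.1 p.2)
    have h := (hud (p.1, p.2)).hasFDerivAt.comp_hasDerivAt p.1 hg
    exact h
  have hd1eq : ∀ p : ℝ × ℝ, d1 u p = fderiv ℝ u p ((1:ℝ), (0:ℝ)) := fun p => (hd1h p).deriv
  have hd1h' : ∀ p : ℝ × ℝ, HasDerivAt (fun s => u (s, p.2)) (d1 u p) p.1 := by
    intro p; rw [hd1eq]; exact hd1h p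
  have hd1c : Continuous (d1 u) := by
    have h : d1 u = fun p => fderiv ℝ u p ((1:ℝ), (0:ℝ)) := funext hd1eq
    rw [h]
    exact (hu.continuous_fderiv (by simp)).clm_apply continuous_const
  -- D = dH(∂τ u)
  set D : ℝ × ℝ → ℝ := fun p => fderiv ℝ (Hhat p.2) (u p) (d1 u p) with hD
  have hfdHt : ∀ (t : ℝ) (x : CE n), HasFDerivAt (Hhat t)
      ((fderiv ℝ (Function.uncurry Hhat) (t, x)).comp (ContinuousLinearMap.inr ℝ ℝ (CE n))) x := by
    intro t x
    have hf := ((hUH.differentiable (by simp)) (t, x)).hasFDerivAt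
    exact hf.comp x (hasFDerivAt_prodMk_right t x)
  have hDeq : D = fun p : ℝ × ℝ =>
      fderiv ℝ (Function.uncurry Hhat) (p.2, u p) ((0:ℝ), d1 u p) := by
    funext p
    rw [hD]
    simp only
    rw [(hfdHt p.2 (u p)).fderiv]
    rfl
  have hDc : Continuous D := by
    rw [hDeq]
    exact ((hUH.continuous_fderiv (by simp)).comp
      (continuous_snd.prodMk hu.continuous)).clm_apply (continuous_const.prodMk hd1c)
  -- PDE rearrangement
  have hPDE2 : ∀ p ∈ strip,
      d2 u p - (1 - ρ p.1) • hamVF Hhat p.2 (u p) = (Complex.I : ℂ) • d1 u p := by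
    intro p hp
    have h := hpde p hp.2
    have h2 : (Complex.I : ℂ) • (d2 u p - (1 - ρ p.1) • hamVF Hhat p.2 (u p)) = -d1 u p :=
      eq_neg_of_add_eq_zero_right h
    have h3 := congrArg (fun v : CE n => (Complex.I : ℂ) • v) h2
    simp only [smul_smul, Complex.I_mul_I, neg_one_smul, smul_neg] at h3
    exact neg_inj.mp h3
  have hsymp : ∀ p ∈ strip, symp (d1 u p) (d2 u p) = ‖d1 u p‖ ^ 2 - (1 - ρ p.1) * D p := by
    intro p hp
    have h2 : d2 u p = (Complex.I : ℂ) • d1 u p + (1 - ρ p.1) • hamVF Hhat p.2 (u p) :=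
      sub_eq_iff_eq_add.mp (hPDE2 p hp)
    rw [h2, hamVF, ImpAux.symp_formula, ImpAux.inner_gradient]
  have henden : ∀ p ∈ strip, enDensity Hhat (fun τ => 1 - ρ τ) u p = 2 * ‖d1 u p‖ ^ 2 := by
    intro p hp
    simp only [enDensity]
    rw [hPDE2 p hp, norm_smul]
    simp only [Complex.norm_I, one_mul]
    ring
  -- integrability of pieces on the strip
  have hg2int : IntegrableOn (fun p => ‖d1 u p‖ ^ 2) strip := by
    refine MeasureTheory.IntegrableOn.congr_fun (hfin.const_mul (1/2)) ?_ hstripm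
    intro p hp
    simp only
    rw [henden p hp]; ring
  have hρmD : IntegrableOn (fun p : ℝ × ℝ => (1 - ρ p.1) * D p) strip := by
    refine hdH.bdd_mul (c := 1) ?_ ?_
    · exact (continuous_const.sub (hρ.smooth.continuous.comp continuous_fst)).aestronglyMeasurable
    · refine Eventually.of_forall fun p => ?_
      rw [Real.norm_eq_abs, abs_le]
      constructor
      · linarith [(hρ.mem p.1).2]
      · linarith [(hρ.mem p.1).1]
  have harea_eq : area u = (∫ p in strip, ‖d1 u p‖ ^ 2) - ∫ p in strip, (1 - ρ p.1) * D p := by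
    rw [← integral_sub hg2int hρmD]
    simp only [area]
    exact setIntegral_congr_fun hstripm fun p hp => hsymp p hp
  -- Fubini
  have hprod : (volume : Measure (ℝ × ℝ)).restrict strip
      = (volume : Measure ℝ).prod ((volume : Measure ℝ).restrict (Set.Icc 0 1)) := by
    simp only [strip]
    rw [MeasureTheory.Measure.volume_eq_prod, ← MeasureTheory.Measure.prod_restrict,
      MeasureTheory.Measure.restrict_univ]
  have hDprod : Integrable D
      ((volume : Measure ℝ).prod ((volume : Measure ℝ).restrict (Set.Icc (0:ℝ) 1))) := by
    rw [← hprod]; exact hdH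
  have hρmDprod : Integrable (fun p : ℝ × ℝ => (1 - ρ p.1) * D p)
      ((volume : Measure ℝ).prod ((volume : Measure ℝ).restrict (Set.Icc (0:ℝ) 1))) := by
    rw [← hprod]; exact hρmD
  set J : ℝ → ℝ := fun τ => ∫ t in Set.Icc (0:ℝ) 1, D (τ, t) with hJ
  have hfub : (∫ p in strip, (1 - ρ p.1) * D p) = ∫ τ : ℝ, (1 - ρ τ) * J τ := by
    have h0 : (∫ p in strip, (1 - ρ p.1) * D p) = ∫ p : ℝ × ℝ, (1 - ρ p.1) * D p
        ∂((volume : Measure ℝ).prod ((volume : Measure ℝ).restrict (Set.Icc (0:ℝ) 1))) := by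
      rw [hprod]
    rw [h0, MeasureTheory.integral_prod _ hρmDprod]
    refine integral_congr_ae (Eventually.of_forall fun τ => ?_)
    simp only [hJ]
    rw [MeasureTheory.integral_const_mul]
  -- G and its derivative
  set L : ℝ := ∫ t in Set.Icc (0:ℝ) 1, Hhat t (ℓ t) with hLdef
  set G : ℝ → ℝ := fun τ => ∫ t in Set.Icc (0:ℝ) 1, Hhat t (u (τ, t)) with hG
  have hFcont : ∀ s : ℝ, Continuous (fun t => Hhat t (u (s, t))) := fun s =>
    hUHc.comp (continuous_id.prodMk (hu.continuous.comp (Continuous.prodMk_right s)))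
  have hGd : ∀ τ₀ : ℝ, HasDerivAt G (J τ₀) τ₀ := by
    intro τ₀
    have hKcpt : IsCompact (Set.Icc (τ₀ - 1) (τ₀ + 1) ×ˢ Set.Icc (0:ℝ) 1) :=
      isCompact_Icc.prod isCompact_Icc
    obtain ⟨C, hC⟩ := hKcpt.exists_bound_of_continuousOn hDc.continuousOn
    have main := hasDerivAt_integral_of_dominated_loc_of_deriv_le
      (F := fun s t => Hhat t (u (s, t))) (F' := fun s t => D (s, t))
      (x₀ := τ₀) (s := Metric.ball τ₀ 1) (bound := fun _ => C)
      (μ := (volume : Measure ℝ).restrict (Set.Icc (0:ℝ) 1))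
      (Metric.ball_mem_nhds τ₀ one_pos)
      (Eventually.of_forall fun s => (hFcont s).aestronglyMeasurable)
      ((hFcont τ₀).integrableOn_Icc)
      ((hDc.comp (Continuous.prodMk_right τ₀)).aestronglyMeasurable)
      ?_ ((continuous_const : Continuous fun _ : ℝ => C).integrableOn_Icc) ?_
    · exact main.2
    · refine (MeasureTheory.ae_restrict_iff' measurableSet_Icc).2
        (Eventually.of_forall fun t ht s hs => ?_)
      refine hC (s, t) ⟨?_, ht⟩
      rw [Metric.mem_ball, Real.dist_eq, abs_sub_lt_iff] at hs
      constructor <;> [linarith [hs.2]; linarith [hs.1]]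
    · refine (MeasureTheory.ae_restrict_iff' measurableSet_Icc).2
        (Eventually.of_forall fun t _ s _ => ?_)
      have h1 : HasFDerivAt (Hhat t) (fderiv ℝ (Hhat t) (u (s, t))) (u (s, t)) :=
        ((hHt_d t) _).hasFDerivAt
      have h2 : HasDerivAt (fun s' => u (s', t)) (d1 u (s, t)) s := hd1h' (s, t)
      exact h1.comp_hasDerivAt s h2
  have hGc : Continuous G := continuous_iff_continuousAt.2 fun τ => (hGd τ).continuousAt
  -- limit of G at -infinity
  have hGlim : Tendsto G atBot (nhds L) := by
    simp only [hG, hLdef]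
    refine MeasureTheory.tendsto_integral_filter_of_dominated_convergence
      (bound := fun _ => C1 + C0) ?_ ?_ ?_ ?_
    · exact Eventually.of_forall fun τ => (hFcont τ).aestronglyMeasurable
    · exact Eventually.of_forall fun τ => Eventually.of_forall fun t => by
        simpa [Real.norm_eq_abs] using hHbound t (u (τ, t))
    · exact (continuous_const : Continuous fun _ : ℝ => C1 + C0).integrableOn_Icc
    · refine (MeasureTheory.ae_restrict_iff' measurableSet_Icc).2
        (Eventually.of_forall fun t ht => ?_)
      exact ((hHt_c t).tendsto (ℓ t)).comp (hconv.tendsto_at ht)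
  -- F = (1-ρ)G and FTC
  set Fρ : ℝ → ℝ := fun τ => (1 - ρ τ) * G τ with hFρ
  set F' : ℝ → ℝ := fun τ => -(deriv ρ τ) * G τ + (1 - ρ τ) * J τ with hF'
  have hρd : ∀ τ, HasDerivAt ρ (deriv ρ τ) τ := fun τ =>
    ((hρ.smooth.differentiable (by simp)) τ).hasDerivAt
  have hFd : ∀ τ, HasDerivAt Fρ (F' τ) τ := by
    intro τ
    simp only [hFρ, hF']
    exact ((hρd τ).const_sub 1).mul (hGd τ)
  have hderivρc : Continuous (deriv ρ) := hρ.smooth.continuous_deriv (by simp)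
  have hderivzero := ImpAux.deriv_elong_zero hρ.smooth hρ.zero hρ.one
  have hT3int : Integrable (fun τ => deriv ρ τ * G τ) volume := by
    apply Continuous.integrable_of_hasCompactSupport (hderivρc.mul hGc)
    refine HasCompactSupport.intro (isCompact_Icc (a := (0:ℝ)) (b := 1)) fun τ hτ => ?_
    rw [Pi.mul_apply, hderivzero τ (fun h => hτ (Set.Ioo_subset_Icc_self h)), zero_mul]
  have hT1int : Integrable (fun τ => -(deriv ρ τ) * G τ) volume := by
    have h : (fun τ : ℝ => -(deriv ρ τ) * G τ) = fun τ => -(deriv ρ τ * G τ) := by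
      funext τ; ring
    rw [h]; exact hT3int.neg
  have hJNint : Integrable (fun τ => ∫ t in Set.Icc (0:ℝ) 1, ‖D (τ, t)‖) volume :=
    hDprod.integral_norm_prod_left
  have hJmeas : AEStronglyMeasurable J volume :=
    hDprod.aestronglyMeasurable.integral_prod_right'
  have hT2int : Integrable (fun τ => (1 - ρ τ) * J τ) volume := by
    refine Integrable.mono' hJNint
      (((continuous_const.sub hρ.smooth.continuous).aestronglyMeasurable).mul hJmeas) ?_
    refine Eventually.of_forall fun τ => ?_
    rw [Real.norm_eq_abs, abs_mul]
    have h1 : |1 - ρ τ| ≤ 1 := by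
      rw [abs_le]
      constructor
      · linarith [(hρ.mem τ).2]
      · linarith [(hρ.mem τ).1]
    have h2 : |J τ| ≤ ∫ t in Set.Icc (0:ℝ) 1, ‖D (τ, t)‖ := by
      simp only [hJ]
      simpa [Real.norm_eq_abs] using
        MeasureTheory.norm_integral_le_integral_norm
          (μ := (volume : Measure ℝ).restrict (Set.Icc (0:ℝ) 1)) (f := fun t => D (τ, t))
    calc |1 - ρ τ| * |J τ| ≤ 1 * ∫ t in Set.Icc (0:ℝ) 1, ‖D (τ, t)‖ :=
          mul_le_mul h1 h2 (abs_nonneg _) zero_le_one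
      _ = _ := one_mul _
  have hF'int : Integrable F' volume := by
    simp only [hF']
    exact hT1int.add hT2int
  have hFρtend : Tendsto Fρ atBot (nhds L) := by
    refine Tendsto.congr' ?_ hGlim
    filter_upwards [Iic_mem_atBot (0:ℝ)] with τ hτ
    simp only [hFρ, hρ.zero τ hτ]
    ring
  have hIic : ∫ τ in Set.Iic (1:ℝ), F' τ = -L := by
    have h := MeasureTheory.integral_Iic_of_hasDerivAt_of_tendsto
      (f := Fρ) (f' := F') (a := (1:ℝ)) (m := L)
      (hFd 1).continuousAt.continuousWithinAt (fun x _ => hFd x)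
      hF'int.integrableOn hFρtend
    rw [h]
    have hone : Fρ 1 = 0 := by simp [hFρ, hρ.one 1 le_rfl]
    rw [hone]; ring
  have hIoi : ∫ τ in Set.Ioi (1:ℝ), F' τ = 0 := by
    rw [MeasureTheory.setIntegral_congr_fun measurableSet_Ioi
      (g := fun _ : ℝ => (0:ℝ)) ?_]
    · simp
    · intro τ hτ
      simp only [hF']
      rw [hderivzero τ (fun h => absurd h.2 (not_lt.2 (le_of_lt hτ))),
        hρ.one τ (le_of_lt hτ)]
      ring
  have htotal : ∫ τ : ℝ, F' τ = -L := by
    have h := MeasureTheory.integral_add_compl (measurableSet_Iic (a := (1:ℝ))) hF'int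
    rw [Set.compl_Iic] at h
    rw [← h, hIic, hIoi]; ring
  have hsplit : (∫ τ : ℝ, (1 - ρ τ) * J τ) = -L + ∫ τ : ℝ, deriv ρ τ * G τ := by
    have hid : (fun τ : ℝ => (1 - ρ τ) * J τ)
        = fun τ => F' τ + deriv ρ τ * G τ := by
      funext τ; simp only [hF']; ring
    rw [hid, MeasureTheory.integral_add hF'int hT3int, htotal]
  -- final assembly
  have hA : area u = (∫ p in strip, ‖d1 u p‖ ^ 2) + L - ∫ τ : ℝ, deriv ρ τ * G τ := by
    rw [harea_eq, hfub, hsplit]; ring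
  have hLint : ∫ t in (0:ℝ)..1, Hhat t (ℓ t) = L := by
    rw [hLdef, intervalIntegral.integral_of_le zero_le_one, ← integral_Icc_eq_integral_Ioc]
  have hEnonneg : 0 ≤ ∫ p in strip, ‖d1 u p‖ ^ 2 :=
    setIntegral_nonneg hstripm fun p _ => by positivity
  -- sup/inf bound
  have hsupc : Continuous fun t => ⨆ x : CE n, H0 t x :=
    ImpAux.continuous_iSup hH0smooth.continuous hH0supp
  have hinfc : Continuous fun t => ⨅ x : CE n, H1 t x :=
    ImpAux.continuous_iInf hH1smooth.continuous hH1supp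
  have hbddA : ∀ t : ℝ, BddAbove (Set.range (H0 t)) := by
    intro t
    refine ⟨C0, ?_⟩
    rintro y ⟨x, rfl⟩
    exact (le_abs_self _).trans (by simpa [Real.norm_eq_abs] using hC0 (t, x))
  have hbddB : ∀ t : ℝ, BddBelow (Set.range (H1 t)) := by
    intro t
    refine ⟨-C1, ?_⟩
    rintro y ⟨x, rfl⟩
    exact neg_le_of_abs_le (by simpa [Real.norm_eq_abs] using hC1 (t, x))
  have hpt : ∀ (t : ℝ) (y : CE n),
      Hhat t y ≤ (⨆ x : CE n, H0 t x) - ⨅ x : CE n, H1 (1 - t) x := by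
    intro t y
    rw [hHhat]
    simp only
    have h1 : H0 t (θinv t y) ≤ ⨆ x : CE n, H0 t x := le_ciSup (hbddA t) _
    have h2 : (⨅ x : CE n, H1 (1 - t) x) ≤ H1 (1 - t) y := ciInf_le (hbddB _) _
    linarith
  have hinf2c : Continuous fun t : ℝ => ⨅ x : CE n, H1 (1 - t) x :=
    hinfc.comp (continuous_const.sub continuous_id)
  have hGleM : ∀ τ : ℝ, G τ ≤ Eplus H0 + Eminus H1 := by
    intro τ
    have hle : G τ ≤ ∫ t in Set.Icc (0:ℝ) 1,
        ((⨆ x : CE n, H0 t x) - ⨅ x : CE n, H1 (1 - t) x) := by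
      simp only [hG]
      refine setIntegral_mono_on (hFcont τ).integrableOn_Icc
        ((hsupc.sub hinf2c).integrableOn_Icc)
        measurableSet_Icc fun t _ => hpt t (u (τ, t))
    refine hle.trans (le_of_eq ?_)
    rw [integral_Icc_eq_integral_Ioc, ← intervalIntegral.integral_of_le zero_le_one,
      intervalIntegral.integral_sub (hsupc.intervalIntegrable 0 1)
        (hinf2c.intervalIntegrable 0 1)]
    have hcv : (∫ t in (0:ℝ)..1, ⨅ x : CE n, H1 (1 - t) x)
        = ∫ t in (0:ℝ)..1, ⨅ x : CE n, H1 t x := by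
      have h := intervalIntegral.integral_comp_sub_left
        (a := (0:ℝ)) (b := 1) (fun s => ⨅ x : CE n, H1 s x) 1
      simpa using h
    rw [hcv]
    simp only [Eplus, Eminus]
    ring
  have hρ'nonneg : ∀ τ : ℝ, 0 ≤ deriv ρ τ := ImpAux.deriv_elong_nonneg hρ.smooth hρ.mono
  have hderivint : Integrable (deriv ρ) volume := by
    apply Continuous.integrable_of_hasCompactSupport hderivρc
    exact HasCompactSupport.intro (isCompact_Icc (a := (0:ℝ)) (b := 1))
      fun τ hτ => hderivzero τ (fun h => hτ (Set.Ioo_subset_Icc_self h))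
  have hfinalle : (∫ τ : ℝ, deriv ρ τ * G τ) ≤ Eplus H0 + Eminus H1 := by
    have h1 : (∫ τ : ℝ, deriv ρ τ * G τ)
        ≤ ∫ τ : ℝ, deriv ρ τ * (Eplus H0 + Eminus H1) :=
      integral_mono hT3int (hderivint.mul_const _)
        fun τ => mul_le_mul_of_nonneg_left (hGleM τ) (hρ'nonneg τ)
    rw [MeasureTheory.integral_mul_const,
      ImpAux.integral_deriv_elong hρ.smooth hρ.zero hρ.one, one_mul] at h1
    exact h1
  rw [ge_iff_le, hLint, hA]
  linarith [hEnonneg, hfinalle]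

end
end

section
/- Final energy estimate for two Hamiltonians (Proposition 5.7, transcribed to ℂⁿ): Let H⁽⁰⁾, H⁽¹⁾ : [0,1] × ℂⁿ → ℝ be smooth compactly supported Hamiltonians; set θ_t := φ_{H⁽¹⁾}^{1−t} ∘ (φ_{H⁽¹⁾}^1)⁻¹ and Ĥ(t,x) := −H⁽¹⁾(1−t, x) + H⁽⁰⁾(t, θ_t⁻¹(x)). Let K ≥ 1, ρ_K an elongation function of type ρ_K, and let u : ℝ × [0,1] → ℂⁿ be a smooth map solving ∂u/∂τ + i(∂u/∂t − ρ_K(τ)X_{Ĥ_t}(u(τ,t))) = 0 with finite energy E_{(Ĥ,ρ_K)}(u) < ∞. Assume the improper integral ∫u*ω converges and ∫_{ℝ×[0,1]} |dĤ_t(u(τ,t))[∂u/∂τ(τ,t)]| dτ dt < ∞. Then both of the following hold: (i) ∫u*ω ≥ −(‖H⁽⁰⁾‖ + ‖H⁽¹⁾‖), and (ii) E_{(Ĥ,ρ_K)}(u) ≤ ∫u*ω + ‖H⁽⁰⁾‖ + ‖H⁽¹⁾‖. -/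
open MeasureTheory Set Filter

noncomputable section

section AuxLemmas
variable {n : ℕ}

lemma rinner_eq_re (v w : CE n) :
    inner (𝕜 := ℝ) v w = Complex.re (inner (𝕜 := ℂ) v w) := by
  simp [PiLp.inner_apply, Complex.inner, Complex.re_sum]

lemma rinner_Ismul_negIsmul (a w : CE n) :
    inner (𝕜 := ℝ) ((Complex.I:ℂ) • a) ((-Complex.I:ℂ) • w) = - inner (𝕜 := ℝ) w a := by
  rw [rinner_eq_re, rinner_eq_re, inner_smul_left, inner_smul_right]
  simp [inner_conj_symm]
  rw [← inner_conj_symm, Complex.conj_re]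

lemma rinner_Ismul_self (a : CE n) :
    inner (𝕜 := ℝ) ((Complex.I:ℂ) • a) ((Complex.I:ℂ) • a) = ‖a‖^2 := by
  have h := rinner_eq_re ((Complex.I:ℂ) • a) ((Complex.I:ℂ) • a)
  rw [h, inner_smul_left, inner_smul_right]
  have h2 : (starRingEnd ℂ) Complex.I * (Complex.I * (inner (𝕜 := ℂ) a a)) = inner (𝕜 := ℂ) a a := by
    rw [Complex.conj_I]; ring_nf; rw [Complex.I_sq]; ring
  rw [h2, ← rinner_eq_re, real_inner_self_eq_norm_sq]

lemma gradient_inner_eq (f : CE n → ℝ) (x v : CE n) :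
    inner (𝕜 := ℝ) (gradient f x) v = fderiv ℝ f x v :=
  InnerProductSpace.toDual_symm_apply

lemma d1_eq_fderiv {u : ℝ × ℝ → CE n} (hu : ContDiff ℝ (⊤ : ℕ∞) u) (p : ℝ × ℝ) :
    d1 u p = fderiv ℝ u p ((1:ℝ), (0:ℝ)) := by
  have h : HasDerivAt (fun s : ℝ => (s, p.2)) ((1:ℝ), (0:ℝ)) p.1 :=
    HasDerivAt.prodMk (hasDerivAt_id _) (hasDerivAt_const _ _)
  have h2 := ((hu.differentiable (by simp)) (p.1, p.2)).hasFDerivAt.comp_hasDerivAt p.1 h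
  simpa [d1, Function.comp_def] using h2.deriv

lemma hasDerivAt_slice {u : ℝ × ℝ → CE n} (hu : ContDiff ℝ (⊤ : ℕ∞) u) (p : ℝ × ℝ) :
    HasDerivAt (fun s => u (s, p.2)) (d1 u p) p.1 := by
  have h : HasDerivAt (fun s : ℝ => (s, p.2)) ((1:ℝ), (0:ℝ)) p.1 :=
    HasDerivAt.prodMk (hasDerivAt_id _) (hasDerivAt_const _ _)
  have h2 := ((hu.differentiable (by simp)) (p.1, p.2)).hasFDerivAt.comp_hasDerivAt p.1 h
  rw [d1_eq_fderiv hu]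
  exact h2

lemma d1_cont {u : ℝ × ℝ → CE n} (hu : ContDiff ℝ (⊤ : ℕ∞) u) : Continuous (d1 u) := by
  have : d1 u = fun p => fderiv ℝ u p ((1:ℝ), (0:ℝ)) := funext fun p => d1_eq_fderiv hu p
  rw [this]
  exact ((hu.fderiv_right (m := (⊤ : ℕ∞)) (by simp)).continuous).clm_apply continuous_const

lemma pointwise_symp {Hh : ℝ → CE n → ℝ} {ρ : ℝ → ℝ} {u : ℝ × ℝ → CE n}
    (hpde : SolvesCR Hh ρ u) {p : ℝ × ℝ} (hp : p.2 ∈ Set.Icc (0:ℝ) 1) :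
    symp (d1 u p) (d2 u p)
      = (1/2) * enDensity Hh ρ u p - ρ p.1 * fderiv ℝ (Hh p.2) (u p) (d1 u p) := by
  have h := hpde p hp
  set a := d1 u p with ha
  set X := hamVF Hh p.2 (u p) with hX
  have h1 : (Complex.I:ℂ) • (d2 u p - ρ p.1 • X) = -a := eq_neg_of_add_eq_zero_right h
  have hc : d2 u p - ρ p.1 • X = (Complex.I:ℂ) • a := by
    have h3 := congrArg (fun v => (-Complex.I:ℂ) • v) h1
    simp only [smul_smul] at h3
    have : (-Complex.I:ℂ) * Complex.I = 1 := by
      rw [neg_mul, Complex.I_mul_I]; ring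
    rw [this, one_smul] at h3
    rw [h3, smul_neg, neg_smul, neg_neg]
  have hd2 : d2 u p = (Complex.I:ℂ) • a + ρ p.1 • X := by
    rw [← hc]; abel
  have hsymp : symp (d1 u p) (d2 u p) = ‖a‖^2 - ρ p.1 * fderiv ℝ (Hh p.2) (u p) a := by
    rw [symp, hd2, ← ha, inner_add_right, rinner_Ismul_self, real_inner_smul_right]
    rw [hX, hamVF, rinner_Ismul_negIsmul, gradient_inner_eq]
    ring
  have hen : enDensity Hh ρ u p = 2 * ‖a‖^2 := by
    rw [enDensity, ← hX, hc, norm_smul]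
    simp [Complex.norm_I]
    ring
  rw [hsymp, hen]; ring

lemma tau_integral_bound {Hht : CE n → ℝ} {ρ : ℝ → ℝ} {u : ℝ × ℝ → CE n} {K : ℝ}
    (hK : 1 ≤ K) (hρ : IsElongationK K ρ) (t : ℝ)
    (hHt : ContDiff ℝ (⊤ : ℕ∞) Hht) (hu : ContDiff ℝ (⊤ : ℕ∞) u)
    {A B : ℝ} (hA : ∀ x, Hht x ≤ A) (hB : ∀ x, B ≤ Hht x) :
    (∫ τ : ℝ, ρ τ * fderiv ℝ Hht (u (τ, t)) (d1 u (τ, t))) ≤ A - B := by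
  set f : ℝ → ℝ := fun τ => Hht (u (τ, t)) with hf
  set f' : ℝ → ℝ := fun τ => fderiv ℝ Hht (u (τ, t)) (d1 u (τ, t)) with hf'def
  have hcu : Continuous fun τ : ℝ => u (τ, t) :=
    hu.continuous.comp (continuous_id.prodMk continuous_const)
  have hf' : ∀ τ : ℝ, HasDerivAt f (f' τ) τ := fun τ =>
    ((hHt.differentiable (by simp) _).hasFDerivAt).comp_hasDerivAt τ (hasDerivAt_slice hu (τ, t))
  have hf'c : Continuous f' := by
    have h1 : Continuous fun τ : ℝ => fderiv ℝ Hht (u (τ, t)) :=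
      (hHt.continuous_fderiv (by simp)).comp hcu
    exact h1.clm_apply ((d1_cont hu).comp (continuous_id.prodMk continuous_const))
  have hfc : Continuous f := hHt.continuous.comp hcu
  have hρc : Continuous ρ := hρ.smooth.continuous
  have hρ'c : Continuous (deriv ρ) := hρ.smooth.continuous_deriv (by simp)
  have hKpos : (0:ℝ) < K := lt_of_lt_of_le one_pos hK
  have hKK : -K ≤ K := by linarith
  have hρK : ρ K = 0 := hρ.zero K (by rw [abs_of_pos hKpos])
  have hρmK : ρ (-K) = 0 := hρ.zero (-K) (by rw [abs_neg, abs_of_pos hKpos])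
  have hρmK1 : ρ (-K + 1) = 1 := by
    apply hρ.one
    rw [abs_of_nonpos (by linarith)]; linarith
  have hρK1 : ρ (K - 1) = 1 := by
    apply hρ.one
    rw [abs_of_nonneg (by linarith)]
  -- step 1: full-line integral equals interval integral over [-K,K]
  have step1 : (∫ τ : ℝ, ρ τ * f' τ) = ∫ τ in (-K)..K, ρ τ * f' τ := by
    rw [intervalIntegral.integral_of_le hKK, ← integral_Icc_eq_integral_Ioc]
    refine (setIntegral_eq_integral_of_forall_compl_eq_zero fun τ hτ => ?_).symm
    have : K ≤ |τ| := by
      rcases not_and_or.mp hτ with h | h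
      · rw [abs_of_nonpos (by push_neg at h; linarith)]; push_neg at h; linarith
      · push_neg at h; rw [abs_of_pos (by linarith)]; linarith
    rw [hρ.zero τ this, zero_mul]
  -- step 2: integration by parts
  have hρd : ∀ x ∈ Set.uIcc (-K) K, HasDerivAt ρ (deriv ρ x) x := fun x _ =>
    (hρ.smooth.differentiable (by simp) x).hasDerivAt
  have hfd : ∀ x ∈ Set.uIcc (-K) K, HasDerivAt f (f' x) x := fun x _ => hf' x
  have step2 : ∫ τ in (-K)..K, ρ τ * f' τ
      = ρ K * f K - ρ (-K) * f (-K) - ∫ τ in (-K)..K, deriv ρ τ * f τ := by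
    exact intervalIntegral.integral_mul_deriv_eq_deriv_mul hρd hfd
      (hρ'c.intervalIntegrable _ _) (hf'c.intervalIntegrable _ _)
  have hint : ∀ a b : ℝ, IntervalIntegrable (fun τ => deriv ρ τ * f τ) volume a b :=
    fun a b => (hρ'c.mul hfc).intervalIntegrable _ _
  -- split
  have split : ∫ τ in (-K)..K, deriv ρ τ * f τ
      = (∫ τ in (-K)..(-K+1), deriv ρ τ * f τ) + (∫ τ in (-K+1)..(K-1), deriv ρ τ * f τ)
        + ∫ τ in (K-1)..K, deriv ρ τ * f τ := by
    rw [intervalIntegral.integral_add_adjacent_intervals (hint _ _) (hint _ _),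
      intervalIntegral.integral_add_adjacent_intervals (hint _ _) (hint _ _)]
  -- middle vanishes
  have hd0 : ∀ τ ∈ Set.Ioo (-K+1) (K-1), deriv ρ τ = 0 := by
    intro τ hτ
    have hev : ρ =ᶠ[nhds τ] fun _ => 1 := by
      filter_upwards [isOpen_Ioo.mem_nhds hτ] with x hx
      exact hρ.one x (abs_le.mpr ⟨by linarith [hx.1], le_of_lt hx.2⟩)
    rw [hev.deriv_eq, deriv_const]
  have mid : (∫ τ in (-K+1)..(K-1), deriv ρ τ * f τ) = 0 := by
    rw [intervalIntegral.integral_of_le (by linarith), integral_Ioc_eq_integral_Ioo,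
      setIntegral_congr_fun measurableSet_Ioo
        (fun τ hτ => by rw [hd0 τ hτ, zero_mul] : Set.EqOn _ (fun _ => (0:ℝ)) _)]
    simp
  -- left piece
  have hderiv_int : ∀ a b : ℝ, (∫ τ in a..b, deriv ρ τ) = ρ b - ρ a := fun a b =>
    intervalIntegral.integral_deriv_eq_sub (fun x _ => hρ.smooth.differentiable (by simp) x)
      (hρ'c.intervalIntegrable _ _)
  have left : B ≤ ∫ τ in (-K)..(-K+1), deriv ρ τ * f τ := by
    have h1 : (∫ τ in (-K)..(-K+1), deriv ρ τ * B) ≤ ∫ τ in (-K)..(-K+1), deriv ρ τ * f τ := by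
      apply intervalIntegral.integral_mono_on (by linarith)
        ((hρ'c.mul continuous_const).intervalIntegrable _ _) (hint _ _)
      intro x hx
      exact mul_le_mul_of_nonneg_left (hB (u (x, t))) (hρ.incr x hx)
    have h2 : (∫ τ in (-K)..(-K+1), deriv ρ τ * B) = B := by
      rw [intervalIntegral.integral_mul_const, hderiv_int, hρmK1, hρmK]; ring
    linarith
  have right : -A ≤ ∫ τ in (K-1)..K, deriv ρ τ * f τ := by
    have h1 : (∫ τ in (K-1)..K, deriv ρ τ * A) ≤ ∫ τ in (K-1)..K, deriv ρ τ * f τ := by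
      apply intervalIntegral.integral_mono_on (by linarith)
        ((hρ'c.mul continuous_const).intervalIntegrable _ _) (hint _ _)
      intro x hx
      exact mul_le_mul_of_nonpos_left (hA (u (x, t))) (hρ.decr x hx)
    have h2 : (∫ τ in (K-1)..K, deriv ρ τ * A) = -A := by
      rw [intervalIntegral.integral_mul_const, hderiv_int, hρK, hρK1]; ring
    linarith
  rw [step1, step2, split, mid, hρK, hρmK]
  simp only [zero_mul, sub_zero, zero_sub, add_zero]
  linarith

lemma global_bound {H : ℝ → CE n → ℝ} (hs : Continuous (Function.uncurry H))
    (hc : HasCompactSupport (Function.uncurry H)) : ∃ C : ℝ, ∀ t x, |H t x| ≤ C := by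
  obtain ⟨C, hC⟩ := hc.exists_bound_of_continuous hs
  exact ⟨C, fun t x => hC (t, x)⟩

lemma dist_fst_pair {X : Type*} [PseudoMetricSpace X] (t s : ℝ) (x : X) :
    dist ((t, x) : ℝ × X) (s, x) = dist t s := by
  rw [Prod.dist_eq, dist_self]
  exact max_eq_left dist_nonneg

lemma sup_continuous {H : ℝ → CE n → ℝ} (hs : ContDiff ℝ (⊤ : ℕ∞) (Function.uncurry H))
    (hc : HasCompactSupport (Function.uncurry H)) :
    Continuous (fun t => ⨆ x : CE n, H t x) := by
  obtain ⟨L, hL⟩ := hs.lipschitzWith_of_hasCompactSupport hc (by simp)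
  obtain ⟨C, hC⟩ := global_bound hs.continuous hc
  have hbdd : ∀ t : ℝ, BddAbove (Set.range (H t)) :=
    fun t => ⟨C, by rintro y ⟨x, rfl⟩; exact (abs_le.mp (hC t x)).2⟩
  have key : ∀ t s : ℝ, (⨆ x : CE n, H t x) ≤ (⨆ x : CE n, H s x) + L * dist t s := by
    intro t s
    refine ciSup_le fun x => ?_
    have h1 : dist (H t x) (H s x) ≤ L * dist t s := by
      have := hL.dist_le_mul (t, x) (s, x)
      rwa [dist_fst_pair] at this
    have h2 : H t x - H s x ≤ L * dist t s :=
      le_trans (le_abs_self _) (by rwa [← Real.dist_eq])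
    have h3 : H s x ≤ ⨆ y : CE n, H s y := le_ciSup (hbdd s) x
    linarith
  refine (LipschitzWith.of_dist_le_mul (K := L) fun t s => ?_).continuous
  rw [Real.dist_eq, abs_sub_le_iff]
  constructor
  · have := key t s; have hd : dist t s = dist s t := dist_comm t s; linarith [key t s]
  · have := key s t; rw [dist_comm s t] at this; linarith

lemma inf_continuous {H : ℝ → CE n → ℝ} (hs : ContDiff ℝ (⊤ : ℕ∞) (Function.uncurry H))
    (hc : HasCompactSupport (Function.uncurry H)) :
    Continuous (fun t => ⨅ x : CE n, H t x) := by
  obtain ⟨L, hL⟩ := hs.lipschitzWith_of_hasCompactSupport hc (by simp)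
  obtain ⟨C, hC⟩ := global_bound hs.continuous hc
  have hbdd : ∀ t : ℝ, BddBelow (Set.range (H t)) :=
    fun t => ⟨-C, by rintro y ⟨x, rfl⟩; exact (abs_le.mp (hC t x)).1⟩
  have key : ∀ t s : ℝ, (⨅ x : CE n, H s x) - L * dist t s ≤ ⨅ x : CE n, H t x := by
    intro t s
    refine le_ciInf fun x => ?_
    have h1 : dist (H t x) (H s x) ≤ L * dist t s := by
      have := hL.dist_le_mul (t, x) (s, x)
      rwa [dist_fst_pair] at this
    have h1' : |H t x - H s x| ≤ L * dist t s := by rwa [Real.dist_eq] at h1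
    have h2 : H s x - H t x ≤ L * dist t s := (abs_sub_le_iff.mp h1').2
    have h3 : (⨅ y : CE n, H s y) ≤ H s x := ciInf_le (hbdd s) x
    linarith
  refine (LipschitzWith.of_dist_le_mul (K := L) fun t s => ?_).continuous
  rw [Real.dist_eq, abs_sub_le_iff]
  constructor
  · have := key s t; rw [dist_comm s t] at this; linarith
  · have := key t s; linarith

lemma strip_fubini (g : ℝ × ℝ → ℝ) (hg : IntegrableOn g strip) :
    ((∫ p in strip, g p) = ∫ t in Set.Icc (0:ℝ) 1, ∫ τ : ℝ, g (τ, t)) ∧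
      IntegrableOn (fun t => ∫ τ : ℝ, g (τ, t)) (Set.Icc (0:ℝ) 1) := by
  have hmeas : (volume : Measure (ℝ × ℝ)).restrict strip
      = ((volume : Measure ℝ).restrict Set.univ).prod ((volume : Measure ℝ).restrict (Set.Icc 0 1)) := by
    rw [strip, Measure.prod_restrict, ← Measure.volume_eq_prod]
  have hg' : Integrable g (((volume : Measure ℝ).restrict Set.univ).prod
      ((volume : Measure ℝ).restrict (Set.Icc 0 1))) := by
    rw [← hmeas]; exact hg
  constructor
  · have := integral_prod_symm g hg'
    rw [← hmeas] at this
    simpa [Measure.restrict_univ] using this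
  · have := hg'.integral_prod_right
    simpa [Measure.restrict_univ, IntegrableOn] using this

end AuxLemmas

/-- Proposition 5.7: final energy estimate for two Hamiltonians.
For finite-energy solutions of the `ρ_K`-perturbed Cauchy–Riemann equation for
`Ĥ(t,x) = −H⁽¹⁾(1−t,x) + H⁽⁰⁾(t, θ_t⁻¹(x))`, one has
`∫u*ω ≥ −(‖H⁽⁰⁾‖ + ‖H⁽¹⁾‖)` and `E_{(Ĥ,ρ_K)}(u) ≤ ∫u*ω + ‖H⁽⁰⁾‖ + ‖H⁽¹⁾‖`. -/
theorem final_energy_estimate {n : ℕ} (H0 H1 : ℝ → CE n → ℝ) (φ1 : ℝ → CE n ≃ CE n)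
    (hH0smooth : ContDiff ℝ (⊤ : ℕ∞) (Function.uncurry H0))
    (hH0supp : HasCompactSupport (Function.uncurry H0))
    (hH1smooth : ContDiff ℝ (⊤ : ℕ∞) (Function.uncurry H1))
    (hH1supp : HasCompactSupport (Function.uncurry H1))
    (hφ1 : IsHamFlow H1 φ1)
    (θinv : ℝ → CE n → CE n)
    (hθinv : θinv = fun t x => φ1 1 ((φ1 (1 - t)).symm x))
    (Hhat : ℝ → CE n → ℝ)
    (hHhat : Hhat = fun t x => -H1 (1 - t) x + H0 t (θinv t x))
    (K : ℝ) (hK : 1 ≤ K) (ρ : ℝ → ℝ) (hρ : IsElongationK K ρ)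
    (u : ℝ × ℝ → CE n)
    (hu : ContDiff ℝ (⊤ : ℕ∞) u)
    (hpde : SolvesCR Hhat ρ u)
    (hfin : IntegrableOn (enDensity Hhat ρ u) strip)
    (harea : IntegrableOn (fun p => symp (d1 u p) (d2 u p)) strip)
    (hdH : IntegrableOn (fun p => fderiv ℝ (Hhat p.2) (u p) (d1 u p)) strip) :
    -(hoferNorm H0 + hoferNorm H1) ≤ area u ∧
      energy Hhat ρ u ≤ area u + hoferNorm H0 + hoferNorm H1 := by
  have hstrip_meas : MeasurableSet strip := MeasurableSet.univ.prod measurableSet_Icc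
  set g : ℝ × ℝ → ℝ := fun p => ρ p.1 * fderiv ℝ (Hhat p.2) (u p) (d1 u p) with hgdef
  -- integrability of g on the strip
  have hg_int : IntegrableOn g strip := by
    apply Integrable.bdd_mul (c := 1) hdH
    · exact ((hρ.smooth.continuous.comp continuous_fst).aestronglyMeasurable)
    · exact ae_of_all _ (fun p => by
        rw [Real.norm_eq_abs]
        exact abs_le.mpr ⟨by linarith [(hρ.mem p.1).1], (hρ.mem p.1).2⟩)
  -- area identity
  have hsymp_eq : Set.EqOn (fun p => symp (d1 u p) (d2 u p))
      (fun p => (1/2) * enDensity Hhat ρ u p - g p) strip :=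
    fun p hp => pointwise_symp hpde hp.2
  have harea_eq : area u = energy Hhat ρ u - ∫ p in strip, g p := by
    rw [area, setIntegral_congr_fun hstrip_meas hsymp_eq, energy,
      integral_sub (hfin.const_mul (1/2)) hg_int, integral_const_mul]
  -- energy nonneg
  have henergy : 0 ≤ energy Hhat ρ u := by
    rw [energy]
    have : 0 ≤ ∫ p in strip, enDensity Hhat ρ u p :=
      setIntegral_nonneg hstrip_meas fun p _ => by simp only [enDensity]; positivity
    linarith
  -- smoothness of Hhat in x for each t
  have hθsmooth : ContDiff ℝ (⊤ : ℕ∞) (fun p : ℝ × CE n => θinv p.1 p.2) := by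
    rw [hθinv]
    have h2 : ContDiff ℝ (⊤ : ℕ∞) (fun p : ℝ × CE n => (φ1 (1 - p.1)).symm p.2) :=
      hφ1.smooth_symm.comp (((contDiff_const.sub contDiff_fst)).prodMk contDiff_snd)
    have h3 : ContDiff ℝ (⊤ : ℕ∞) (fun x : CE n => φ1 1 x) :=
      hφ1.smooth.comp (contDiff_const.prodMk contDiff_id)
    exact h3.comp h2
  have hHhatsmooth : ContDiff ℝ (⊤ : ℕ∞) (Function.uncurry Hhat) := by
    rw [hHhat]
    have h1 : ContDiff ℝ (⊤ : ℕ∞) (fun p : ℝ × CE n => H1 (1 - p.1) p.2) :=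
      hH1smooth.comp ((contDiff_const.sub contDiff_fst).prodMk contDiff_snd)
    have h2 : ContDiff ℝ (⊤ : ℕ∞) (fun p : ℝ × CE n => H0 p.1 (θinv p.1 p.2)) :=
      hH0smooth.comp (contDiff_fst.prodMk hθsmooth)
    exact h1.neg.add h2
  have hHt : ∀ t : ℝ, ContDiff ℝ (⊤ : ℕ∞) (Hhat t) := fun t =>
    hHhatsmooth.comp ((contDiff_const (c := t)).prodMk contDiff_id)
  -- bounds
  obtain ⟨C0, hC0⟩ := global_bound hH0smooth.continuous hH0supp
  obtain ⟨C1, hC1⟩ := global_bound hH1smooth.continuous hH1supp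
  have bdd0a : ∀ t : ℝ, BddAbove (Set.range (H0 t)) :=
    fun t => ⟨C0, by rintro y ⟨x, rfl⟩; exact (abs_le.mp (hC0 t x)).2⟩
  have bdd0b : ∀ t : ℝ, BddBelow (Set.range (H0 t)) :=
    fun t => ⟨-C0, by rintro y ⟨x, rfl⟩; exact (abs_le.mp (hC0 t x)).1⟩
  have bdd1a : ∀ t : ℝ, BddAbove (Set.range (H1 t)) :=
    fun t => ⟨C1, by rintro y ⟨x, rfl⟩; exact (abs_le.mp (hC1 t x)).2⟩
  have bdd1b : ∀ t : ℝ, BddBelow (Set.range (H1 t)) :=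
    fun t => ⟨-C1, by rintro y ⟨x, rfl⟩; exact (abs_le.mp (hC1 t x)).1⟩
  set A : ℝ → ℝ := fun t => -(⨅ x : CE n, H1 (1 - t) x) + ⨆ x : CE n, H0 t x with hAdef
  set B : ℝ → ℝ := fun t => -(⨆ x : CE n, H1 (1 - t) x) + ⨅ x : CE n, H0 t x with hBdef
  have hA : ∀ t : ℝ, ∀ x, Hhat t x ≤ A t := by
    intro t x
    rw [hHhat, hAdef]
    have h1 : (⨅ y : CE n, H1 (1 - t) y) ≤ H1 (1 - t) x := ciInf_le (bdd1b _) x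
    have h2 : H0 t (θinv t x) ≤ ⨆ y : CE n, H0 t y := le_ciSup (bdd0a _) _
    simp only
    linarith
  have hB : ∀ t : ℝ, ∀ x, B t ≤ Hhat t x := by
    intro t x
    rw [hHhat, hBdef]
    have h1 : H1 (1 - t) x ≤ ⨆ y : CE n, H1 (1 - t) y := le_ciSup (bdd1a _) x
    have h2 : (⨅ y : CE n, H0 t y) ≤ H0 t (θinv t x) := ciInf_le (bdd0b _) _
    simp only
    linarith
  -- Fubini
  obtain ⟨hJeq, hIint⟩ := strip_fubini g hg_int
  -- pointwise bound on the inner integral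
  have hptwise : ∀ t ∈ Set.Icc (0:ℝ) 1, (∫ τ : ℝ, g (τ, t)) ≤ A t - B t := by
    intro t _
    have := tau_integral_bound (Hht := Hhat t) hK hρ t (hHt t) hu (hA t) (hB t)
    simpa [hgdef] using this
  -- continuity and integrability of A - B
  have hcont_s0 : Continuous (fun t => ⨆ x : CE n, H0 t x) := sup_continuous hH0smooth hH0supp
  have hcont_i0 : Continuous (fun t => ⨅ x : CE n, H0 t x) := inf_continuous hH0smooth hH0supp
  have hcont_s1 : Continuous (fun t => ⨆ x : CE n, H1 t x) := sup_continuous hH1smooth hH1supp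
  have hcont_i1 : Continuous (fun t => ⨅ x : CE n, H1 t x) := inf_continuous hH1smooth hH1supp
  have hcont_sub : Continuous (fun t : ℝ => (1 : ℝ) - t) := continuous_const.sub continuous_id
  have hcontR : Continuous (fun t => A t - B t) := by
    rw [hAdef, hBdef]
    exact (((hcont_i1.comp hcont_sub).neg.add hcont_s0).sub
      ((hcont_s1.comp hcont_sub).neg.add hcont_i0))
  have hRint : IntegrableOn (fun t => A t - B t) (Set.Icc (0:ℝ) 1) :=
    hcontR.integrableOn_Icc
  have hJle : (∫ p in strip, g p) ≤ ∫ t in Set.Icc (0:ℝ) 1, (A t - B t) := by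
    rw [hJeq]
    exact setIntegral_mono_on hIint hRint measurableSet_Icc hptwise
  -- compute the bound integral
  have hRval : (∫ t in Set.Icc (0:ℝ) 1, (A t - B t)) = hoferNorm H0 + hoferNorm H1 := by
    rw [integral_Icc_eq_integral_Ioc, ← intervalIntegral.integral_of_le zero_le_one]
    have hsplit : (fun t => A t - B t)
        = fun t => ((fun s => ⨆ x : CE n, H1 s x) (1 - t) - (fun s => ⨅ x : CE n, H1 s x) (1 - t))
          + ((⨆ x : CE n, H0 t x) - ⨅ x : CE n, H0 t x) := by
      funext t; rw [hAdef, hBdef]; simp only; ring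
    rw [hsplit]
    have hc1s : Continuous (fun t : ℝ => (fun s => ⨆ x : CE n, H1 s x) (1 - t)) :=
      hcont_s1.comp hcont_sub
    have hc1i : Continuous (fun t : ℝ => (fun s => ⨅ x : CE n, H1 s x) (1 - t)) :=
      hcont_i1.comp hcont_sub
    rw [intervalIntegral.integral_add
      (show IntervalIntegrable (fun t => (fun s => ⨆ x : CE n, H1 s x) (1 - t) - (fun s => ⨅ x : CE n, H1 s x) (1 - t)) volume 0 1 from (hc1s.sub hc1i).intervalIntegrable _ _)
      (show IntervalIntegrable (fun t => (⨆ x : CE n, H0 t x) - ⨅ x : CE n, H0 t x) volume 0 1 from (hcont_s0.sub hcont_i0).intervalIntegrable _ _),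
      intervalIntegral.integral_sub (hc1s.intervalIntegrable _ _)
        (hc1i.intervalIntegrable _ _),
      intervalIntegral.integral_sub (hcont_s0.intervalIntegrable _ _)
        (hcont_i0.intervalIntegrable _ _)]
    have e1 : (∫ t in (0:ℝ)..1, (fun s => ⨆ x : CE n, H1 s x) (1 - t))
        = ∫ t in (0:ℝ)..1, ⨆ x : CE n, H1 t x := by
      rw [intervalIntegral.integral_comp_sub_left (fun s => ⨆ x : CE n, H1 s x) 1]
      norm_num
    have e2 : (∫ t in (0:ℝ)..1, (fun s => ⨅ x : CE n, H1 s x) (1 - t))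
        = ∫ t in (0:ℝ)..1, ⨅ x : CE n, H1 t x := by
      rw [intervalIntegral.integral_comp_sub_left (fun s => ⨅ x : CE n, H1 s x) 1]
      norm_num
    rw [e1, e2]
    rw [hoferNorm, hoferNorm, Eplus, Eminus, Eplus, Eminus]
    ring
  refine ⟨?_, ?_⟩
  · have : area u = energy Hhat ρ u - ∫ p in strip, g p := harea_eq
    have h2 : (∫ p in strip, g p) ≤ hoferNorm H0 + hoferNorm H1 := by
      rw [← hRval]; exact hJle
    linarith
  · have h2 : (∫ p in strip, g p) ≤ hoferNorm H0 + hoferNorm H1 := by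
      rw [← hRval]; exact hJle
    linarith [harea_eq]

end
end
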